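/- Relative Multiplication Lemma: let A, B, C be unital C*-algebras over ℂ, let G : A → B be an SPU map, and let ξ : B → C be a positive linear map. Suppose a ∈ A satisfies ξ (G (star a * a) − star (G a) * G a) = 0. Then ξ (G (star a * d) − star (G a) * G d) = 0 and ξ (G (star d * a) − star (G d) * G a) = 0 for every d ∈ A. -/

import Mathlib

/-!
The map `(x, y) ↦ ξ (G (star x * y) - star (G x) * G y)` is a `C`-valued sesquilinear form `φ`,
nonnegative on the diagonal by the Schwarz inequality for `G` and the positivity of `ξ`.
If `φ a a = 0`, then `φ (a + t • v) (a + t • v) = t • (φ a v + φ v a) + t ^ 2 • φ v v ≥ 0`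
for every real `t`; dividing by `|t|` and letting `t → 0` from either side (the positive cone
of `C` is closed) gives `φ a v + φ v a = 0`. Taking `v = d` and `v = I • d` separates
`φ a d` from `φ d a`.
-/

open Filter Topology

section OrderedModule
variable {M : Type*} [AddCommGroup M] [PartialOrder M] [Module ℝ M] [TopologicalSpace M]
  [OrderClosedTopology M] [ContinuousAdd M] [ContinuousSMul ℝ M]

theorem nonneg_of_forall_pos_nonneg_add_smul {s w : M} (h : ∀ t : ℝ, 0 < t → 0 ≤ s + t • w) :
    0 ≤ s := by
  have hlim : Tendsto (fun t : ℝ => s + t • w) (𝓝[>] 0) (𝓝 s) := by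
    simpa using ((continuous_id.smul continuous_const).const_add s).continuousWithinAt
      (s := Set.Ioi (0 : ℝ)) (x := 0) |>.tendsto
  exact ge_of_tendsto hlim (eventually_nhdsWithin_of_forall h)

variable [IsOrderedAddMonoid M] [PosSMulMono ℝ M]

theorem eq_zero_of_forall_nonneg_smul_add_sq_smul {s w : M}
    (h : ∀ t : ℝ, 0 ≤ t • s + t ^ 2 • w) : s = 0 := by
  refine le_antisymm ?_ (nonneg_of_forall_pos_nonneg_add_smul (w := w) fun t ht => ?_)
  · refine neg_nonneg.mp (nonneg_of_forall_pos_nonneg_add_smul (w := w) fun t ht => ?_)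
    rw [← smul_nonneg_iff_nonneg_of_pos_left ht]
    convert h (-t) using 1
    module
  · rw [← smul_nonneg_iff_nonneg_of_pos_left ht]
    convert h t using 1
    module

end OrderedModule

namespace LinearMap

variable {V M : Type*} [AddCommGroup V] [Module ℂ V] [AddCommGroup M] [Module ℂ M]
  [PartialOrder M] [IsOrderedAddMonoid M] [Module ℝ M] [IsScalarTower ℝ ℂ M] [PosSMulMono ℝ M]
  [TopologicalSpace M] [OrderClosedTopology M] [ContinuousAdd M] [ContinuousSMul ℝ M]
  {φ : V →ₗ⋆[ℂ] V →ₗ[ℂ] M}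

theorem apply_add_apply_swap_eq_zero (hφ : ∀ x, 0 ≤ φ x x) {a : V} (ha : φ a a = 0) (v : V) :
    φ a v + φ v a = 0 := by
  refine eq_zero_of_forall_nonneg_smul_add_sq_smul (w := φ v v) fun t => ?_
  convert hφ (a + (t : ℂ) • v) using 1
  simp only [map_add, map_smulₛₗ, add_apply, smul_apply, ha, Complex.conj_ofReal,
    RingHom.id_apply]
  module

theorem apply_eq_zero_of_apply_self_eq_zero (hφ : ∀ x, 0 ≤ φ x x) {a : V} (ha : φ a a = 0)
    (d : V) : φ a d = 0 ∧ φ d a = 0 := by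
  have hI := apply_add_apply_swap_eq_zero hφ ha (Complex.I • d)
  simp only [map_smulₛₗ, smul_apply, neg_apply, Complex.conj_I, RingHom.id_apply, neg_smul] at hI
  have h1 := apply_add_apply_swap_eq_zero hφ ha d
  have had : (2 * Complex.I) • φ a d = 0 := by
    linear_combination (norm := module) Complex.I • h1 + hI
  have hda : (2 * Complex.I) • φ d a = 0 := by
    linear_combination (norm := module) Complex.I • h1 - hI
  exact ⟨(smul_eq_zero.mp had).resolve_left (by simp),
    (smul_eq_zero.mp hda).resolve_left (by simp)⟩

end LinearMap

section SchwarzDefect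

variable {A B : Type*} [NonUnitalNonAssocSemiring A] [StarRing A] [Module ℂ A] [StarModule ℂ A]
  [IsScalarTower ℂ A A] [SMulCommClass ℂ A A] [NonUnitalNonAssocRing B] [StarRing B] [Module ℂ B]
  [StarModule ℂ B] [IsScalarTower ℂ B B] [SMulCommClass ℂ B B]

def schwarzDefect (G : A →ₗ[ℂ] B) : A →ₗ⋆[ℂ] A →ₗ[ℂ] B :=
  LinearMap.mk₂'ₛₗ (starRingEnd ℂ) (RingHom.id ℂ) (fun x y => G (star x * y) - star (G x) * G y)
    (fun x x' y => by simp only [star_add, add_mul, map_add]; abel)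
    (fun c x y => by simp only [star_smul, smul_mul_assoc, map_smul, smul_sub]; rfl)
    (fun x y y' => by simp only [mul_add, map_add]; abel)
    (fun c x y => by simp only [mul_smul_comm, map_smul, smul_sub]; rfl)

end SchwarzDefect

theorem relative_multiplication_lemma_general
    {A B C : Type*}
    [CStarAlgebra A]
    [CStarAlgebra B] [PartialOrder B] [StarOrderedRing B]
    [CStarAlgebra C] [PartialOrder C] [StarOrderedRing C]
    (G : A →ₗ[ℂ] B)
    (hGKS : ∀ a : A, star (G a) * G a ≤ G (star a * a))
    (ξ : B →ₗ[ℂ] C) (hξpos : ∀ b : B, 0 ≤ b → 0 ≤ ξ b)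
    (a : A) (ha : ξ (G (star a * a) - star (G a) * G a) = 0) :
    ∀ d : A,
      ξ (G (star a * d) - star (G a) * G d) = 0 ∧
      ξ (G (star d * a) - star (G d) * G a) = 0 :=
  (schwarzDefect G).compr₂ₛₗ ξ |>.apply_eq_zero_of_apply_self_eq_zero
    (fun x => hξpos _ (sub_nonneg.mpr (hGKS x))) ha

/-- **The relative Multiplication Lemma.** Let `G : A → B` be an SPU map and `ξ : B → C` a
positive linear map between unital C*-algebras over `ℂ`. If `a ∈ A` satisfies
`ξ (G (star a * a) - star (G a) * G a) = 0`, then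
`ξ (G (star a * d) - star (G a) * G d) = 0` and `ξ (G (star d * a) - star (G d) * G a) = 0`
for every `d ∈ A`. -/
theorem relative_multiplication_lemma
    {A B C : Type*}
    [CStarAlgebra A]
    [CStarAlgebra B] [PartialOrder B] [StarOrderedRing B]
    [CStarAlgebra C] [PartialOrder C] [StarOrderedRing C]
    (G : A →ₗ[ℂ] B) (hG1 : G 1 = 1)
    (hGKS : ∀ a : A, star (G a) * G a ≤ G (star a * a))
    (ξ : B →ₗ[ℂ] C) (hξpos : ∀ b : B, 0 ≤ b → 0 ≤ ξ b)
    (a : A) (ha : ξ (G (star a * a) - star (G a) * G a) = 0) :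
    ∀ d : A,
      ξ (G (star a * d) - star (G a) * G d) = 0 ∧
      ξ (G (star d * a) - star (G d) * G a) = 0 :=
  relative_multiplication_lemma_general G hGKS ξ hξpos a ha
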